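/- Let A be a p×p companion matrix, e = (0,...,0,1)^T, and b = (b_0,...,b_{p-1})^T. If Y_t = ∑_{r=1}^p α_r ∫_{-∞}^t e^{λ_r(t-u)} dL_u with α_r = b(λ_r)/a'(λ_r) (λ_r distinct roots of a with negative real part), then Y_t = ∫_{-∞}^∞ g(t-u) dL_u with g(t) = b^T e^{At} e · 1_{[0,∞)}(t). In the deterministic version: for any locally integrable function f, ∑_{r=1}^p α_r ∫_{-∞}^t e^{λ_r(t-u)} f(u) du = ∫_{-∞}^t b^T e^{A(t-u)} e f(u) du. -/

import Mathlib

open Matrix NormedSpace Polynomial MeasureTheory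

/-- The `p × p` companion matrix with ones on the superdiagonal and last row
`(-a_p, …, -a_1)`, where `c j = a_{p-j}`, so `a(z) = z^p + ∑ j, c j * z^j`. -/
def companion (p : ℕ) (c : Fin p → ℂ) : Matrix (Fin p) (Fin p) ℂ :=
  Matrix.of fun i j => if (i : ℕ) + 1 = p then -c j else if (j : ℕ) = (i : ℕ) + 1 then 1 else 0

/-! The vectors `(1, λ_r, …, λ_r^{p-1})` are eigenvectors of the companion matrix `A`, and by
Lagrange interpolation (compare leading coefficients of `X^i` and its interpolant at the `λ_r`)
the last basis vector `e` equals `∑_r (1, λ_r, …, λ_r^{p-1}) / a'(λ_r)`. Hence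
`bᵀ e^{zA} e = ∑_r α_r e^{λ_r z}`, and integrating against `f` termwise gives the identity. -/

theorem Matrix.pow_mulVec_of_mulVec_eq_smul {R n : Type*} [CommSemiring R] [Fintype n]
    [DecidableEq n] {M : Matrix n n R} {μ : R} {v : n → R} (h : M *ᵥ v = μ • v) (k : ℕ) :
    (M ^ k) *ᵥ v = μ ^ k • v := by
  induction k with
  | zero => simp
  | succ k ih => rw [pow_succ, ← mulVec_mulVec, h, mulVec_smul, ih, smul_smul, pow_succ']

section

attribute [local instance] Matrix.linftyOpNormedRing Matrix.linftyOpNormedAlgebra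

theorem Matrix.exp_mulVec_of_mulVec_eq_smul {𝕂 n : Type*} [RCLike 𝕂] [Fintype n]
    [DecidableEq n] {M : Matrix n n 𝕂} {μ : 𝕂} {v : n → 𝕂} (h : M *ᵥ v = μ • v) :
    exp M *ᵥ v = exp μ • v := by
  let applyTo : Matrix n n 𝕂 →ₗ[𝕂] (n → 𝕂) := (mulVecBilin 𝕂 𝕂).flip v
  have hM := (exp_series_hasSum_exp' (𝕂 := 𝕂) M).map applyTo
    applyTo.continuous_of_finiteDimensional
  refine hM.unique ?_
  convert (exp_series_hasSum_exp' (𝕂 := 𝕂) μ).smul_const v using 2 with k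
  simp [applyTo, mulVecBilin_apply, pow_mulVec_of_mulVec_eq_smul h, smul_smul]

end

theorem companion_mulVec_pow_of_eval_eq_zero (p : ℕ) (c : Fin p → ℂ) {z : ℂ}
    (hz : z ^ p + ∑ i : Fin p, c i * z ^ (i : ℕ) = 0) :
    companion p c *ᵥ (fun i : Fin p => z ^ (i : ℕ)) = z • fun i : Fin p => z ^ (i : ℕ) := by
  funext i
  simp only [mulVec, dotProduct, companion, of_apply, Pi.smul_apply, smul_eq_mul]
  by_cases hlast : (i : ℕ) + 1 = p
  · simp only [hlast, if_true, neg_mul, Finset.sum_neg_distrib]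
    rw [← pow_succ', hlast]
    linear_combination -hz
  · have hnext : (i : ℕ) + 1 < p := lt_of_le_of_ne i.2 hlast
    simp only [hlast, if_false, ite_mul, one_mul, zero_mul]
    rw [Finset.sum_eq_single_of_mem ⟨(i : ℕ) + 1, hnext⟩ (Finset.mem_univ _)
      fun j _ hj => if_neg fun h => hj (Fin.ext h)]
    simp [pow_succ']

theorem Lagrange.sum_pow_mul_nodalWeight {F ι : Type*} [Field F] [DecidableEq ι] {s : Finset ι}
    {v : ι → F} (hvs : Set.InjOn v s) {n : ℕ} (hn : n < s.card) :
    ∑ i ∈ s, v i ^ n * nodalWeight s v i = if n + 1 = s.card then 1 else 0 := by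
  have h := coeff_eq_sum hvs (P := X ^ n) (by rw [degree_X_pow]; exact_mod_cast hn)
  simp only [coeff_X_pow, eval_pow, eval_X] at h
  simp only [nodalWeight, Finset.prod_inv_distrib, ← div_eq_mul_inv, ← h]
  exact if_congr (by omega) rfl rfl

theorem lastBasisVec_eq_sum_nodalWeight_smul {F : Type*} [Field F] {p : ℕ} {lam : Fin p → F}
    (hlam : Function.Injective lam) :
    (fun i : Fin p => if (i : ℕ) + 1 = p then (1 : F) else 0) =
      ∑ r, Lagrange.nodalWeight Finset.univ lam r • fun i : Fin p => lam r ^ (i : ℕ) := by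
  funext i
  have h := Lagrange.sum_pow_mul_nodalWeight hlam.injOn (s := Finset.univ) (n := i)
    (by simp)
  simp only [Finset.card_univ, Fintype.card_fin] at h
  simp [← h, mul_comm]

theorem Lagrange.nodalWeight_univ_eq_inv_eval_derivative {F : Type*} [Field F] {p : ℕ}
    (lam : Fin p → F) (r : Fin p) :
    nodalWeight Finset.univ lam r = ((derivative (∏ j, (X - C (lam j)))).eval (lam r))⁻¹ := by
  rw [← nodal_eq, nodalWeight_eq_eval_derivative_nodal (Finset.mem_univ r)]

theorem dotProduct_exp_smul_companion_mulVec_lastBasisVec (p : ℕ) (c lam b : Fin p → ℂ)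
    (hfact : ∀ z : ℂ, z ^ p + ∑ i : Fin p, c i * z ^ (i : ℕ) = ∏ r, (z - lam r))
    (hlam : Function.Injective lam) (z : ℂ) :
    b ⬝ᵥ (exp (z • companion p c) *ᵥ fun i => if (i : ℕ) + 1 = p then 1 else 0) =
      ∑ r, (∑ i : Fin p, b i * lam r ^ (i : ℕ)) /
        (derivative (∏ j, (X - C (lam j)))).eval (lam r) * Complex.exp (lam r * z) := by
  have heig (r : Fin p) : (z • companion p c) *ᵥ (fun i : Fin p => lam r ^ (i : ℕ)) =
      (lam r * z) • fun i : Fin p => lam r ^ (i : ℕ) := by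
    have hroot := (hfact (lam r)).trans (Finset.prod_eq_zero (Finset.mem_univ r) (sub_self _))
    rw [smul_mulVec, companion_mulVec_pow_of_eval_eq_zero p c hroot, smul_smul, mul_comm]
  rw [lastBasisVec_eq_sum_nodalWeight_smul hlam, mulVec_sum, dotProduct_sum]
  refine Finset.sum_congr rfl fun r _ => ?_
  rw [mulVec_smul, exp_mulVec_of_mulVec_eq_smul (heig r), ← Complex.exp_eq_exp_ℂ,
    dotProduct_smul, dotProduct_smul, Lagrange.nodalWeight_univ_eq_inv_eval_derivative]
  simp only [smul_eq_mul, dotProduct]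
  ring

theorem carma_kernel_integral_general (p : ℕ) (c : Fin p → ℂ) (lam : Fin p → ℂ) (b : Fin p → ℂ)
    (hfact : ∀ z : ℂ, z ^ p + ∑ i : Fin p, c i * z ^ (i : ℕ) = ∏ r, (z - lam r))
    (hdist : Function.Injective lam)
    (f : ℝ → ℂ) (t : ℝ)
    (hint : ∀ r, IntegrableOn (fun u : ℝ => Complex.exp (lam r * ((t - u : ℝ) : ℂ)) * f u) (Set.Iic t)) :
    ∑ r, (∑ i : Fin p, b i * lam r ^ (i : ℕ)) /
          (derivative (∏ j, (X - C (lam j)))).eval (lam r) *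
        ∫ u in Set.Iic t, Complex.exp (lam r * ((t - u : ℝ) : ℂ)) * f u =
      ∫ u in Set.Iic t,
        dotProduct b
            ((exp (((t - u : ℝ) : ℂ) • companion p c)).mulVec
              (fun i => if (i : ℕ) + 1 = p then 1 else 0)) * f u := by
  simp_rw [dotProduct_exp_smul_companion_mulVec_lastBasisVec p c lam b hfact hdist,
    Finset.sum_mul, mul_assoc, ← integral_const_mul]
  exact (integral_finsetSum _ fun r _ => (hint r).const_mul _).symm

/-- Deterministic moving-average identity: if `a(z) = ∏_r (z - λ_r)` with distinct roots of
negative real part, `α_r = b(λ_r)/a'(λ_r)`, then for a locally integrable `f` (for which the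
CAR(1) integrals converge),
`∑_r α_r ∫_{-∞}^t e^{λ_r(t-u)} f(u) du = ∫_{-∞}^t bᵀ e^{A(t-u)} e · f(u) du`. -/
theorem carma_kernel_integral (p : ℕ) (c : Fin p → ℂ) (lam : Fin p → ℂ) (b : Fin p → ℂ)
    (hfact : ∀ z : ℂ, z ^ p + ∑ i : Fin p, c i * z ^ (i : ℕ) = ∏ r, (z - lam r))
    (hdist : Function.Injective lam)
    (hneg : ∀ r, (lam r).re < 0)
    (f : ℝ → ℂ) (hf : LocallyIntegrable f) (t : ℝ)
    (hint : ∀ r, IntegrableOn (fun u : ℝ => Complex.exp (lam r * ((t - u : ℝ) : ℂ)) * f u) (Set.Iic t)) :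
    ∑ r, (∑ i : Fin p, b i * lam r ^ (i : ℕ)) /
          (derivative (∏ j, (X - C (lam j)))).eval (lam r) *
        ∫ u in Set.Iic t, Complex.exp (lam r * ((t - u : ℝ) : ℂ)) * f u =
      ∫ u in Set.Iic t,
        dotProduct b
            ((exp (((t - u : ℝ) : ℂ) • companion p c)).mulVec
              (fun i => if (i : ℕ) + 1 = p then 1 else 0)) * f u :=
  carma_kernel_integral_general p c lam b hfact hdist f t hint
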